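/- arXiv:math/0610312 — 3 statements merged into one kernel-verified Lean document; each statement's English description precedes it below -/
import Mathlib

section
/- Let A be a commutative Noetherian ring and M a finitely generated A-module. Then the set {H_Z^0(M) : Z ⊆ Spec A is stable under specialization} of submodules of M is finite; in fact, if M has r associated primes, this set has at most 2^r elements. -/
open CategoryTheory PrimeSpectrum
open scoped TensorProduct

universe u

section BasicDefs

variable {A : Type u} [CommRing A]

/-- A subset `Z` of `Spec A` is stable under specialization. -/
def SpecStable (Z : Set (PrimeSpectrum A)) : Prop :=
  ∀ p ∈ Z, zeroLocus (p.asIdeal : Set A) ⊆ Z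

/-- `H_Z^0(M) = {m ∈ M | Supp (A m) ⊆ Z}`, where `Supp (A m) = V(ann m)`. -/
def zTorsion (Z : Set (PrimeSpectrum A)) (M : Type u) [AddCommGroup M] [Module A M] :
    Submodule A M where
  carrier := {m | zeroLocus (Ideal.torsionOf A M m : Set A) ⊆ Z}
  zero_mem' := by
    intro p hp
    rw [Ideal.torsionOf_zero] at hp
    exact (p.isPrime.ne_top ((Ideal.eq_top_iff_one _).mpr (hp Submodule.mem_top))).elim
  add_mem' := by
    intro m m' hm hm'
    refine subset_trans (subset_trans (zeroLocus_anti_mono_ideal ?_)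
      (by rw [zeroLocus_inf])) (Set.union_subset hm hm')
    intro r hr
    obtain ⟨h1, h2⟩ := Submodule.mem_inf.mp hr
    rw [Ideal.mem_torsionOf_iff] at h1 h2 ⊢
    rw [smul_add, h1, h2, add_zero]
  smul_mem' := by
    intro a m hm
    refine subset_trans (zeroLocus_anti_mono_ideal ?_) hm
    intro r hr
    rw [Ideal.mem_torsionOf_iff] at hr ⊢
    rw [smul_comm, hr, smul_zero]

/-- The functor `M ↦ H_Z^0(M)`. -/
noncomputable def zTorsionFunctor (Z : Set (PrimeSpectrum A)) :
    ModuleCat.{u} A ⥤ ModuleCat.{u} A where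
  obj M := ModuleCat.of A (zTorsion Z M)
  map {M N} f := ModuleCat.ofHom (LinearMap.restrict f.hom (by
    intro m hm
    refine subset_trans (zeroLocus_anti_mono_ideal ?_) hm
    intro r hr
    rw [Ideal.mem_torsionOf_iff] at hr ⊢
    rw [← map_smul, hr, map_zero]))
  map_id M := by ext x; rfl
  map_comp f g := by ext x; rfl

instance (Z : Set (PrimeSpectrum A)) : (zTorsionFunctor.{u} (A := A) Z).Additive where
  map_add := by intros; ext x; rfl

/-- The local cohomology functor `H_Z^p`, defined as the `p`-th right derived functor of
the functor `H_Z^0`. -/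
noncomputable def localCohomologyZ (Z : Set (PrimeSpectrum A)) (p : ℕ) :
    ModuleCat.{u} A ⥤ ModuleCat.{u} A :=
  (zTorsionFunctor Z).rightDerived p

end BasicDefs

section Heights

variable {R : Type*} [CommRing R]

/-- `ht (p/q)`: the supremum of lengths of chains of primes from `q` to `p`. -/
noncomputable def relHeight (q p : PrimeSpectrum R) : ℕ∞ :=
  sSup {n : ℕ∞ | ∃ c : LTSeries (PrimeSpectrum R),
    c.head = q ∧ c.last = p ∧ (c.length : ℕ∞) = n}

/-- The supremum of lengths of chains of primes inside `S` ending at `p`. -/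
noncomputable def heightIn (S : Set (PrimeSpectrum R)) (p : PrimeSpectrum R) : ℕ∞ :=
  sSup {n : ℕ∞ | ∃ c : LTSeries (PrimeSpectrum R),
    (∀ i, c.toFun i ∈ S) ∧ c.last = p ∧ (c.length : ℕ∞) = n}

/-- Comparison map from `ℕ∞` to `ℤ ∪ {∞}`. -/
def eZ (x : ℕ∞) : WithTop ℤ := x.map (fun n : ℕ => (n : ℤ))

end Heights

section ModuleHeights

variable (A : Type u) [CommRing A]

/-- `ht_M p = dim M_p`, the supremum of lengths of chains of primes in `Supp M` ending at `p`. -/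
noncomputable def htM (M : Type u) [AddCommGroup M] [Module A M] (p : PrimeSpectrum A) : ℕ∞ :=
  heightIn (Module.support A M) p

/-- `ht_M b = inf { ht_M p | p ∈ Supp M ∩ V(b) }`. -/
noncomputable def htMIdeal (M : Type u) [AddCommGroup M] [Module A M] (b : Ideal A) : ℕ∞ :=
  sInf (htM A M '' (Module.support A M ∩ zeroLocus (b : Set A)))

/-- The condition (QU). -/
def SatisfiesQU (M : Type u) [AddCommGroup M] [Module A M] : Prop :=
  ∀ p q : PrimeSpectrum A, p ∈ Module.support A M → q ∈ Module.support A M → q ≤ p →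
    relHeight q p + htM A M q = htM A M p

end ModuleHeights

section Depth

variable {R : Type*} [CommRing R]

/-- The depth of a module `M` with respect to an ideal `I`: the supremum of lengths of weakly
regular sequences on `M` with entries in `I`.  (The zero module has depth `∞`.) -/
noncomputable def idealDepth (I : Ideal R) (M : Type*) [AddCommGroup M] [Module R M] : ℕ∞ :=
  sSup {n : ℕ∞ | ∃ rs : List R, (∀ r ∈ rs, r ∈ I) ∧
    RingTheory.Sequence.IsWeaklyRegular M rs ∧ (rs.length : ℕ∞) = n}

end Depth

section LocalDepth

variable (A : Type u) [CommRing A]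

/-- `depth M_q`: the depth of the localized module `M_q` over the local ring `A_q`. -/
noncomputable def primeDepth (q : PrimeSpectrum A) (M : Type u) [AddCommGroup M] [Module A M] :
    ℕ∞ :=
  idealDepth (IsLocalRing.maximalIdeal (Localization.AtPrime q.asIdeal))
    (LocalizedModule q.asIdeal.primeCompl M)

/-- `A_P` is a Cohen–Macaulay local ring: its depth equals its dimension `ht P`. -/
def IsCMLocalizationAt (R : Type*) [CommRing R] (P : PrimeSpectrum R) : Prop :=
  idealDepth (IsLocalRing.maximalIdeal (Localization.AtPrime P.asIdeal))
    (Localization.AtPrime P.asIdeal) = Order.height P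

/-- A Cohen–Macaulay ring: all localizations at primes are Cohen–Macaulay local rings. -/
def IsCMRing (R : Type*) [CommRing R] : Prop :=
  ∀ P : PrimeSpectrum R, IsCMLocalizationAt R P

end LocalDepth

section Conditions

variable (A : Type u) [CommRing A]

/-- A saturated chain of primes: each step is a covering relation. -/
def IsSaturatedChain {R : Type*} [CommRing R] (c : LTSeries (PrimeSpectrum R)) : Prop :=
  ∀ i : Fin c.length, c.toFun i.castSucc ⋖ c.toFun i.succ

/-- A catenary ring: any two saturated chains of primes with the same endpoints have the
same length. -/
def IsCatenaryRing (R : Type*) [CommRing R] : Prop :=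
  ∀ c₁ c₂ : LTSeries (PrimeSpectrum R), c₁.head = c₂.head → c₁.last = c₂.last →
    IsSaturatedChain c₁ → IsSaturatedChain c₂ → c₁.length = c₂.length

/-- (C1): `A` is universally catenary. -/
def IsUniversallyCatenary : Prop :=
  ∀ (B : Type u) [CommRing B] [Algebra A B], Algebra.FiniteType A B → IsCatenaryRing B

/-- (C2): all formal fibers of all localizations of `A` are Cohen–Macaulay:
for every prime `p`, and every prime `q` of `A_p`, the fiber ring
`(A_p)^ ⊗_{A_p} κ(q)` is a Cohen–Macaulay ring, where `(A_p)^` is the completion of `A_p`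
along its maximal ideal and `κ(q)` is the residue field of `A_p` at `q`. -/
def HasCMFormalFibers : Prop :=
  ∀ p : PrimeSpectrum A, ∀ q : PrimeSpectrum (Localization.AtPrime p.asIdeal),
    IsCMRing ((AdicCompletion (IsLocalRing.maximalIdeal (Localization.AtPrime p.asIdeal))
        (Localization.AtPrime p.asIdeal))
      ⊗[Localization.AtPrime p.asIdeal]
      (IsLocalRing.ResidueField (Localization.AtPrime q.asIdeal)))

/-- (C3): the Cohen–Macaulay locus of every finitely generated `A`-algebra is open. -/
def HasOpenCMLoci : Prop :=
  ∀ (B : Type u) [CommRing B] [Algebra A B], Algebra.FiniteType A B →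
    IsOpen {P : PrimeSpectrum B | IsCMLocalizationAt B P}

end Conditions

/-!
For `m ∈ M`, `Supp (A m) = V(ann m)` is the specialization closure of the minimal primes of
`ann m`, and these are associated primes of `M`. Hence for a specialization-stable `Z`, the
submodule `H_Z^0(M)` depends only on the set `Z ∩ Ass M`, and there are at most `2 ^ r` such
sets.
-/

section SpecializationClosure

variable {A : Type u} [CommRing A]

def specializationClosure (T : Set (Ideal A)) : Set (PrimeSpectrum A) :=
  {P | ∃ p ∈ T, p ≤ P.asIdeal}

lemma specStable_specializationClosure (T : Set (Ideal A)) :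
    SpecStable (specializationClosure T) := by
  rintro P ⟨p, hpT, hpP⟩ Q hQ
  exact ⟨p, hpT, hpP.trans ((mem_zeroLocus _ _).mp hQ)⟩

end SpecializationClosure

lemma minimalPrimes_torsionOf_subset_associatedPrimes {A M : Type*} [CommRing A]
    [IsNoetherianRing A] [AddCommGroup M] [Module A M] (m : M) :
    (Ideal.torsionOf A M m).minimalPrimes ⊆ associatedPrimes A M := by
  rw [← Ideal.annihilator_span_singleton_eq_torsionOf]
  exact
    (Module.associatedPrimes.minimalPrimes_annihilator_subset_associatedPrimes A (A ∙ m)).trans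
      (associatedPrimes.subset_of_injective (Submodule.injective_subtype _))

section AssociatedPrimes

variable {A : Type u} [CommRing A] [IsNoetherianRing A] {M : Type u} [AddCommGroup M] [Module A M]

lemma zTorsion_le_zTorsion_of_associatedPrimes {Z Z' : Set (PrimeSpectrum A)}
    (hZ' : SpecStable Z') (h : ∀ P ∈ Z, P.asIdeal ∈ associatedPrimes A M → P ∈ Z') :
    zTorsion Z M ≤ zTorsion Z' M := by
  intro m hm P hP
  obtain ⟨q, hq, hqP⟩ := Ideal.exists_minimalPrimes_le ((mem_zeroLocus _ _).mp hP)
  let Q : PrimeSpectrum A := ⟨q, hq.1.1⟩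
  have hQZ : Q ∈ Z := hm ((mem_zeroLocus _ _).mpr hq.1.2)
  exact hZ' Q (h Q hQZ (minimalPrimes_torsionOf_subset_associatedPrimes m hq))
    ((mem_zeroLocus _ _).mpr hqP)

lemma zTorsion_eq_zTorsion_specializationClosure {Z : Set (PrimeSpectrum A)}
    (hZ : SpecStable Z) :
    zTorsion Z M =
      zTorsion (specializationClosure (associatedPrimes A M ∩ PrimeSpectrum.asIdeal '' Z)) M := by
  apply le_antisymm
  · refine zTorsion_le_zTorsion_of_associatedPrimes (specStable_specializationClosure _) ?_
    exact fun P hPZ hPM ↦ ⟨P.asIdeal, ⟨hPM, P, hPZ, rfl⟩, le_rfl⟩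
  · refine zTorsion_le_zTorsion_of_associatedPrimes hZ ?_
    rintro P ⟨-, ⟨-, Q, hQZ, rfl⟩, hQP⟩ -
    exact hZ Q hQZ ((mem_zeroLocus _ _).mpr hQP)

lemma setOf_zTorsion_subset_image_powerset_associatedPrimes :
    {N : Submodule A M | ∃ Z : Set (PrimeSpectrum A), SpecStable Z ∧ zTorsion Z M = N} ⊆
      (fun T ↦ zTorsion (specializationClosure T) M) '' 𝒫 associatedPrimes A M := by
  rintro N ⟨Z, hZ, rfl⟩
  exact ⟨_, Set.inter_subset_left, (zTorsion_eq_zTorsion_specializationClosure hZ).symm⟩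

end AssociatedPrimes

lemma Set.ncard_le_two_pow_of_subset_image_powerset {α β : Type*} {s : Set β} {t : Set α}
    (ht : t.Finite) {f : Set α → β} (hs : s ⊆ f '' 𝒫 t) : s.ncard ≤ 2 ^ t.ncard :=
  calc s.ncard ≤ (f '' 𝒫 t).ncard := Set.ncard_le_ncard hs (ht.powerset.image f)
    _ ≤ (𝒫 t).ncard := Set.ncard_image_le ht.powerset
    _ = 2 ^ t.ncard := Set.ncard_powerset t ht

/-- (Lemma 2.2, after Raghavan)  For a finitely generated module `M` over a Noetherian ring `A`,
the set `{H_Z^0(M) | Z ⊆ Spec A stable under specialization}` of submodules of `M` is finite,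
of cardinality at most `2 ^ r` where `r` is the number of associated primes of `M`. -/
theorem finiteness_of_zTorsion_submodules
    (A : Type u) [CommRing A] [IsNoetherianRing A]
    (M : Type u) [AddCommGroup M] [Module A M] [Module.Finite A M]
    (r : ℕ) (hr : (associatedPrimes A M).ncard = r) :
    Set.Finite {N : Submodule A M |
        ∃ Z : Set (PrimeSpectrum A), SpecStable Z ∧ zTorsion Z M = N} ∧
      Set.ncard {N : Submodule A M |
        ∃ Z : Set (PrimeSpectrum A), SpecStable Z ∧ zTorsion Z M = N} ≤ 2 ^ r := by
  have hAss : (associatedPrimes A M).Finite := associatedPrimes.finite A M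
  have hsub := setOf_zTorsion_subset_image_powerset_associatedPrimes (A := A) (M := M)
  exact ⟨(hAss.powerset.image _).subset hsub,
    hr ▸ Set.ncard_le_two_pow_of_subset_image_powerset hAss hsub⟩
end

section
/- Let A be a commutative Noetherian ring, M a finitely generated A-module with Ass M = {p_1, …, p_r}, and let 0 = M_1 ∩ … ∩ M_r be a primary decomposition of 0 in M with Ass(M/M_i) = {p_i} for each i. Then for every subset Z of Spec A stable under specialization, H_Z^0(M) = ⋂_{i : p_i ∉ Z} M_i. -/
open CategoryTheory PrimeSpectrum
open scoped TensorProduct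

universe u

/-!
Over a Noetherian ring, a prime `q` contains the annihilator of a nonzero element `x` of a module
with `Ass = {P}` iff `P ≤ q`: the annihilator lies in an associated prime, and `q` contains a
minimal prime over it, which is associated to `A ∙ x`. Since `ann m = ⋂ᵢ ann (m mod Mᵢ)`, this
gives `Supp (A ∙ m) = ⋃_{m ∉ Mᵢ} V(pᵢ)`, which lies in the specialization-stable `Z` iff
`pᵢ ∈ Z` whenever `m ∉ Mᵢ`.
-/

section PrimaryDecomposition

variable {R M : Type*} [CommRing R] [AddCommGroup M] [Module R M]

theorem Ideal.torsionOf_eq_iInf_torsionOf_mk {ι : Type*} {N : ι → Submodule R M}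
    (hN : ⨅ i, N i = ⊥) (m : M) :
    Ideal.torsionOf R M m = ⨅ i, Ideal.torsionOf R (M ⧸ N i) (Submodule.Quotient.mk m) := by
  ext r
  simp only [Ideal.mem_torsionOf_iff, Submodule.mem_iInf, ← Submodule.Quotient.mk_smul,
    Submodule.Quotient.mk_eq_zero]
  rw [← Submodule.mem_iInf, hN, Submodule.mem_bot]

variable [IsNoetherianRing R]

theorem exists_mem_associatedPrimes_le_of_torsionOf_le {x : M} {q : Ideal R} [q.IsPrime]
    (h : Ideal.torsionOf R M x ≤ q) : ∃ P ∈ associatedPrimes R M, P ≤ q := by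
  rw [← Ideal.annihilator_span_singleton_eq_torsionOf] at h
  obtain ⟨P, hP, hPq⟩ := Ideal.exists_minimalPrimes_le h
  refine ⟨P, associatedPrimes.subset_of_injective (R ∙ x).injective_subtype ?_, hPq⟩
  exact Module.associatedPrimes.minimalPrimes_annihilator_subset_associatedPrimes R (R ∙ x) hP

theorem torsionOf_le_iff_of_associatedPrimes_eq_singleton {P : Ideal R}
    (hP : associatedPrimes R M = {P}) {x : M} (hx : x ≠ 0) {q : Ideal R} [q.IsPrime] :
    Ideal.torsionOf R M x ≤ q ↔ P ≤ q := by
  constructor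
  · intro h
    obtain ⟨P', hP', hP'q⟩ := exists_mem_associatedPrimes_le_of_torsionOf_le h
    rw [hP, Set.mem_singleton_iff] at hP'
    rwa [← hP']
  · intro h
    obtain ⟨P', hP', hxP'⟩ := exists_le_isAssociatedPrime_of_isNoetherianRing R x hx
    rw [← AssociatedPrimes.mem_iff, hP, Set.mem_singleton_iff] at hP'
    refine le_trans (fun r hr => ?_) ((hP' ▸ hxP').trans h)
    rwa [Submodule.mem_colon_singleton, Submodule.mem_bot, ← Ideal.mem_torsionOf_iff]

theorem torsionOf_le_iff_exists_of_primary_decomposition {ι : Type*} [Finite ι]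
    {p : ι → Ideal R} {N : ι → Submodule R M} (hdec : ⨅ i, N i = ⊥)
    (hprim : ∀ i, associatedPrimes R (M ⧸ N i) = {p i}) (m : M) {q : Ideal R} [hq : q.IsPrime] :
    Ideal.torsionOf R M m ≤ q ↔ ∃ i, m ∉ N i ∧ p i ≤ q := by
  have := Fintype.ofFinite ι
  rw [Ideal.torsionOf_eq_iInf_torsionOf_mk hdec, ← Finset.inf_univ_eq_iInf, hq.inf_le']
  refine exists_congr fun i => ?_
  by_cases hm : m ∈ N i
  · simp [hm, (Submodule.Quotient.mk_eq_zero _).mpr hm, hq.ne_top]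
  · rw [torsionOf_le_iff_of_associatedPrimes_eq_singleton (hprim i)
      ((Submodule.Quotient.mk_eq_zero _).not.mpr hm)]
    simp [hm]

end PrimaryDecomposition

theorem SpecStable.mem_of_le {R : Type*} [CommRing R] {Z : Set (PrimeSpectrum R)}
    (hZ : SpecStable Z) {P Q : PrimeSpectrum R} (hP : P ∈ Z) (hPQ : P ≤ Q) : Q ∈ Z :=
  hZ P hP ((mem_zeroLocus Q _).mpr hPQ)

theorem zTorsion_eq_iInf_of_primary_decomposition_general
    (A : Type u) [CommRing A] [IsNoetherianRing A]
    (M : Type u) [AddCommGroup M] [Module A M]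
    (r : ℕ) (p : Fin r → PrimeSpectrum A)
    (N : Fin r → Submodule A M) (hdec : ⨅ i, N i = ⊥)
    (hprim : ∀ i, associatedPrimes A (M ⧸ N i) = {(p i).asIdeal})
    (Z : Set (PrimeSpectrum A)) (hZ : SpecStable Z) :
    zTorsion Z M = ⨅ (i : Fin r) (_ : p i ∉ Z), N i := by
  ext m
  change zeroLocus _ ⊆ Z ↔ _
  rw [Set.subset_def]
  simp only [mem_zeroLocus, SetLike.coe_subset_coe,
    torsionOf_le_iff_exists_of_primary_decomposition hdec hprim, asIdeal_le_asIdeal,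
    Submodule.mem_iInf]
  constructor
  · intro h i hi
    by_contra hm
    exact hi (h (p i) ⟨i, hm, le_rfl⟩)
  · rintro h q ⟨i, hm, hiq⟩
    exact hZ.mem_of_le (by_contra fun hi => hm (h i hi)) hiq

/-- If `Ass M = {p_1, …, p_r}` and `0 = M_1 ∩ ⋯ ∩ M_r` is a primary decomposition of `0` in `M`
with `Ass (M/M_i) = {p_i}`, then for every specialization-stable `Z ⊆ Spec A` one has
`H_Z^0(M) = ⋂_{p_i ∉ Z} M_i`. -/
theorem zTorsion_eq_iInf_of_primary_decomposition
    (A : Type u) [CommRing A] [IsNoetherianRing A]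
    (M : Type u) [AddCommGroup M] [Module A M] [Module.Finite A M]
    (r : ℕ) (p : Fin r → PrimeSpectrum A) (hp : Function.Injective p)
    (hAss : associatedPrimes A M = Set.range fun i => (p i).asIdeal)
    (N : Fin r → Submodule A M) (hdec : ⨅ i, N i = ⊥)
    (hprim : ∀ i, associatedPrimes A (M ⧸ N i) = {(p i).asIdeal})
    (Z : Set (PrimeSpectrum A)) (hZ : SpecStable Z) :
    zTorsion Z M = ⨅ (i : Fin r) (_ : p i ∉ Z), N i :=
  zTorsion_eq_iInf_of_primary_decomposition_general A M r p N hdec hprim Z hZ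
end

section
/- Let A be a commutative Noetherian ring, M a finitely generated A-module, and 0 → F^{-n} → F^{-n+1} → … → F^{-1} → F^0 a complex of finitely generated free A-modules with differentials f^i : F^i → F^{i+1} satisfying (a) rank f^{-n} = rank F^{-n}, (b) rank F^i = rank f^i + rank f^{i-1} for each −n < i < 0, and (c) ht_M I_{r_i}(f^i) ≥ −i for each −n ≤ i < 0, where r_i = rank f^i and I_{r_i}(f^i) is the ideal of r_i × r_i minors of f^i. Then for every prime p ∈ Supp M with h = ht_M p and 0 ≤ h < n, the localized complex 0 → (F^{-n})_p → … → (F^{-h})_p is split exact; consequently, for every A_p-module T, H^q(F^• ⊗_A T) = 0 for all q < −h. -/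
open CategoryTheory PrimeSpectrum
open scoped TensorProduct

universe u

section MatrixComplex

variable {A : Type u} [CommRing A]

/-- The ideal generated by the `r × r` minors of a matrix. -/
def minorsIdeal {a b : ℕ} (r : ℕ) (X : Matrix (Fin a) (Fin b) A) : Ideal A :=
  Ideal.span {d | ∃ (ri : Fin r → Fin a) (ci : Fin r → Fin b),
    Function.Injective ri ∧ Function.Injective ci ∧ d = (X.submatrix ri ci).det}

/-- The rank of a matrix over a commutative ring: the largest `r` such that the ideal of
`r × r` minors is nonzero. -/
noncomputable def matrixRank {a b : ℕ} (X : Matrix (Fin a) (Fin b) A) : ℕ :=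
  sSup {r | minorsIdeal r X ≠ ⊥}

/-- The `A`-linear map `(Fin a → M) → (Fin b → M)` induced by a matrix with entries in `A`;
this is the matrix map `A^a → A^b` tensored with `M`. -/
def matVecMap {a b : ℕ} (X : Matrix (Fin b) (Fin a) A) (M : Type u)
    [AddCommGroup M] [Module A M] : (Fin a → M) →ₗ[A] (Fin b → M) where
  toFun v i := ∑ j, X i j • v j
  map_add' v w := by
    funext i
    simp [smul_add, Finset.sum_add_distrib]
  map_smul' c v := by
    funext i
    simp only [RingHom.id_apply, Pi.smul_apply, Finset.smul_sum]
    exact Finset.sum_congr rfl fun j _ => (smul_comm c _ _).symm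

end MatrixComplex

/-!
After localizing at `p`, condition (c) forces `I_{r_j}(f) ⊄ p` for every `j < n - h`, since
otherwise `n - j ≤ ht_M I_{r_j} ≤ ht_M p = h`; so some `r_j × r_j` minor of the `j`-th matrix
`Y_j` becomes a unit in `A_p`. A contracting homotopy `S` is then built degree by degree.
Inductively `E_j = 1 - Y_{j-1} S_{j-1}` factors as `G H` through `A_p^{r_j}` and `Y_j E_j = Y_j`.
Then `Y_j G` has a unit maximal minor, hence a left inverse `L`, and `S_j = G L` satisfies
`S_j Y_j = E_j`. The rows of `1 - Y_j S_j` indexed by the unit minor vanish, so it factors through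
the remaining `m_{j+1} - r_j = r_{j+1}` coordinates, by (b). Applying the homotopy to any
`A_p`-module `T` gives the vanishing of the cohomology.
-/

namespace Matrix

variable {R : Type*} [CommRing R]

lemma one_eq_add_of_sum_equiv {ι κ n : Type*} [Fintype ι] [Fintype κ] [Fintype n] [DecidableEq n]
    (σ : ι ⊕ κ ≃ n) :
    (1 : Matrix n n R).submatrix id (σ ∘ Sum.inl) * (1 : Matrix n n R).submatrix (σ ∘ Sum.inl) id +
      (1 : Matrix n n R).submatrix id (σ ∘ Sum.inr) * (1 : Matrix n n R).submatrix (σ ∘ Sum.inr) id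
      = 1 := by
  ext x y
  have h := σ.sum_comp fun w => (1 : Matrix n n R) x w * (1 : Matrix n n R) w y
  rw [Fintype.sum_sum_type, ← mul_apply, Matrix.mul_one] at h
  exact h

lemma exists_sum_fin_equiv_of_injective {t b : ℕ} {ri : Fin t → Fin b}
    (hri : Function.Injective ri) :
    ∃ σ : Fin t ⊕ Fin (b - t) ≃ Fin b, σ ∘ Sum.inl = ri := by
  classical
  have hcard : Fintype.card ↥(Set.range ri)ᶜ = b - t := by
    rw [Fintype.card_compl_set, Set.card_range_of_injective hri, Fintype.card_fin, Fintype.card_fin]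
  refine ⟨(Equiv.sumCongr (Equiv.ofInjective ri hri) (Fintype.equivFinOfCardEq hcard).symm).trans
    (Equiv.Set.sumCompl (Set.range ri)), ?_⟩
  funext k
  simp

def FactorsThrough {ι : Type*} [Fintype ι] (t : ℕ) (E : Matrix ι ι R) : Prop :=
  ∃ (G : Matrix ι (Fin t) R) (H : Matrix (Fin t) ι R), G * H = E

lemma factorsThrough_one (t : ℕ) : FactorsThrough t (1 : Matrix (Fin t) (Fin t) R) :=
  ⟨1, 1, Matrix.mul_one 1⟩

/-- `S = G (Z G)⁻¹`: since `Z = Z G H`, the unit minor of `Z` is a multiple of `det (Z G)`. -/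
lemma exists_mul_eq_and_mul_eq_one_of_isUnit_det_submatrix {ι : Type*} [Fintype ι] {t : ℕ}
    {Z : Matrix (Fin t) ι R} {G : Matrix ι (Fin t) R} {H : Matrix (Fin t) ι R}
    (hZE : Z * (G * H) = Z) {ci : Fin t → ι} (hu : IsUnit (Z.submatrix id ci).det) :
    ∃ S : Matrix ι (Fin t) R, S * Z = G * H ∧ Z * S = 1 := by
  have hminor : Z.submatrix id ci = Z * G * H.submatrix id ci := by
    conv_lhs => rw [← hZE, ← Matrix.mul_assoc]
    rfl
  have hZG : IsUnit (Z * G).det := by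
    rw [hminor, det_mul] at hu
    exact isUnit_of_mul_isUnit_left hu
  refine ⟨G * (Z * G)⁻¹, ?_, by rw [← Matrix.mul_assoc, mul_nonsing_inv _ hZG]⟩
  calc G * (Z * G)⁻¹ * Z = G * (Z * G)⁻¹ * (Z * G * H) := by rw [Matrix.mul_assoc Z, hZE]
    _ = G * ((Z * G)⁻¹ * (Z * G)) * H := by simp only [Matrix.mul_assoc]
    _ = G * H := by rw [nonsing_inv_mul _ hZG, Matrix.mul_one]

lemma factorsThrough_one_sub_mul_submatrix_one {b t : ℕ} {ri : Fin t → Fin b}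
    (hri : Function.Injective ri) {F : Matrix (Fin b) (Fin t) R}
    (hF : (1 : Matrix (Fin b) (Fin b) R).submatrix ri id * F = 1) :
    FactorsThrough (b - t) (1 - F * (1 : Matrix (Fin b) (Fin b) R).submatrix ri id) := by
  obtain ⟨σ, rfl⟩ := exists_sum_fin_equiv_of_injective hri
  have hsum := one_eq_add_of_sum_equiv (R := R) σ
  set P := (1 : Matrix (Fin b) (Fin b) R).submatrix (σ ∘ Sum.inl) id
  set Q := (1 : Matrix (Fin b) (Fin b) R).submatrix id (σ ∘ Sum.inr)
  set Q' := (1 : Matrix (Fin b) (Fin b) R).submatrix (σ ∘ Sum.inr) id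
  have hPE : P * (1 - F * P) = 0 := by
    rw [Matrix.mul_sub, Matrix.mul_one, ← Matrix.mul_assoc, hF, Matrix.one_mul, sub_self]
  refine ⟨Q, Q' * (1 - F * P), ?_⟩
  rw [← Matrix.mul_assoc, eq_sub_of_add_eq' hsum, Matrix.sub_mul, Matrix.one_mul,
    Matrix.mul_assoc, hPE, Matrix.mul_zero, sub_zero]

lemma exists_mul_eq_and_factorsThrough_one_sub {a b t : ℕ} {Y : Matrix (Fin b) (Fin a) R}
    {E : Matrix (Fin a) (Fin a) R} (hE : FactorsThrough t E) (hYE : Y * E = Y)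
    {ri : Fin t → Fin b} {ci : Fin t → Fin a} (hri : Function.Injective ri)
    (hu : IsUnit (Y.submatrix ri ci).det) :
    ∃ S : Matrix (Fin a) (Fin b) R, S * Y = E ∧ FactorsThrough (b - t) (1 - Y * S) := by
  obtain ⟨G, H, rfl⟩ := hE
  set P := (1 : Matrix (Fin b) (Fin b) R).submatrix ri id
  have hPY : P * Y = Y.submatrix ri id := by
    ext i j
    simp [P, mul_apply, one_apply]
  obtain ⟨S₀, hS₀Y, hYS₀⟩ := exists_mul_eq_and_mul_eq_one_of_isUnit_det_submatrix
    (Z := Y.submatrix ri id) (by rw [← hPY, Matrix.mul_assoc, hYE]) hu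
  refine ⟨S₀ * P, by rw [Matrix.mul_assoc, hPY, hS₀Y], ?_⟩
  rw [← Matrix.mul_assoc]
  exact factorsThrough_one_sub_mul_submatrix_one hri
    (by rw [← Matrix.mul_assoc, hPY, hYS₀])

end Matrix

section ContractingHomotopy

variable {R : Type*} [CommRing R] {m : ℕ → ℕ} (Y : ∀ j, Matrix (Fin (m (j + 1))) (Fin (m j)) R)

/-- The matrix that `S j * Y j` must equal for `S` to be a contracting homotopy in degree `j`. -/
def homotopyDefect (S : ∀ j, Matrix (Fin (m j)) (Fin (m (j + 1))) R) :
    ∀ j, Matrix (Fin (m j)) (Fin (m j)) R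
  | 0 => 1
  | j + 1 => 1 - Y j * S j

lemma homotopyDefect_update (S : ∀ j, Matrix (Fin (m j)) (Fin (m (j + 1))) R) (k : ℕ)
    (T : Matrix (Fin (m k)) (Fin (m (k + 1))) R) {j : ℕ} (hj : j ≤ k) :
    homotopyDefect Y (Function.update S k T) j = homotopyDefect Y S j := by
  cases j with
  | zero => rfl
  | succ j => rw [homotopyDefect, homotopyDefect, Function.update_of_ne (by omega)]

theorem exists_forall_mul_eq_homotopyDefect {n : ℕ} (r : ℕ → ℕ)
    (hcx : ∀ j, j + 2 ≤ n → Y (j + 1) * Y j = 0) (ha : r 0 = m 0)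
    (hb : ∀ j, j + 1 < n → m (j + 1) = r (j + 1) + r j)
    (hu : ∀ j < n, ∃ (ri : Fin (r j) → Fin (m (j + 1))) (ci : Fin (r j) → Fin (m j)),
      Function.Injective ri ∧ IsUnit ((Y j).submatrix ri ci).det) :
    ∃ S : ∀ j, Matrix (Fin (m j)) (Fin (m (j + 1))) R,
      ∀ j < n, S j * Y j = homotopyDefect Y S j := by
  suffices ∀ k ≤ n, ∃ S : ∀ j, Matrix (Fin (m j)) (Fin (m (j + 1))) R,
      (∀ j < k, S j * Y j = homotopyDefect Y S j) ∧
      (k < n → Matrix.FactorsThrough (r k) (homotopyDefect Y S k)) from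
    (this n le_rfl).imp fun _ hS => hS.1
  intro k
  induction k with
  | zero =>
    refine fun _ => ⟨0, by omega, fun _ => ?_⟩
    rw [ha]
    exact Matrix.factorsThrough_one _
  | succ k ih =>
    intro hk
    obtain ⟨S, hS, hfac⟩ := ih (by omega)
    obtain ⟨ri, ci, hri, hunit⟩ := hu k (by omega)
    have hYE : Y k * homotopyDefect Y S k = Y k := by
      cases k with
      | zero => exact Matrix.mul_one _
      | succ j =>
        rw [homotopyDefect, Matrix.mul_sub, Matrix.mul_one, ← Matrix.mul_assoc, hcx j (by omega),
          Matrix.zero_mul, sub_zero]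
    obtain ⟨T, hTY, hTfac⟩ :=
      Matrix.exists_mul_eq_and_factorsThrough_one_sub (hfac (by omega)) hYE hri hunit
    refine ⟨Function.update S k T, fun j hj => ?_, fun hk₁ => ?_⟩
    · rw [homotopyDefect_update Y S k T (by omega)]
      rcases Nat.lt_succ_iff_lt_or_eq.mp hj with hj | rfl
      · rw [Function.update_of_ne (by omega)]
        exact hS j hj
      · rw [Function.update_self]
        exact hTY
    · rw [homotopyDefect, Function.update_self]
      rwa [show m (k + 1) - r k = r (k + 1) by rw [hb k hk₁, Nat.add_sub_cancel]] at hTfac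

theorem exists_contracting_homotopy {n : ℕ} (hn : 0 < n) (r : ℕ → ℕ)
    (hcx : ∀ j, j + 2 ≤ n → Y (j + 1) * Y j = 0) (ha : r 0 = m 0)
    (hb : ∀ j, j + 1 < n → m (j + 1) = r (j + 1) + r j)
    (hu : ∀ j < n, ∃ (ri : Fin (r j) → Fin (m (j + 1))) (ci : Fin (r j) → Fin (m j)),
      Function.Injective ri ∧ IsUnit ((Y j).submatrix ri ci).det) :
    ∃ S : ∀ j, Matrix (Fin (m j)) (Fin (m (j + 1))) R,
      S 0 * Y 0 = 1 ∧ ∀ j, j + 1 < n → Y j * S j + S (j + 1) * Y (j + 1) = 1 := by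
  obtain ⟨S, hS⟩ := exists_forall_mul_eq_homotopyDefect Y r hcx ha hb hu
  exact ⟨S, hS 0 hn, fun j hj => by rw [hS (j + 1) hj, homotopyDefect, add_sub_cancel]⟩

end ContractingHomotopy

section MatVecMap

variable {A : Type u} [CommRing A] {M : Type u} [AddCommGroup M] [Module A M] {a b c : ℕ}

lemma matVecMap_mul (X : Matrix (Fin c) (Fin b) A) (Z : Matrix (Fin b) (Fin a) A) :
    matVecMap (X * Z) M = matVecMap X M ∘ₗ matVecMap Z M := by
  ext v i
  simp only [matVecMap, LinearMap.coe_comp, LinearMap.coe_mk, AddHom.coe_mk, Function.comp_apply,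
    Matrix.mul_apply, Finset.sum_smul, Finset.smul_sum, mul_smul]
  exact Finset.sum_comm

lemma matVecMap_one : matVecMap (1 : Matrix (Fin a) (Fin a) A) M = LinearMap.id := by
  ext v i
  simp [matVecMap, Matrix.one_apply, ite_smul]

lemma matVecMap_add (X Z : Matrix (Fin b) (Fin a) A) :
    matVecMap (X + Z) M = matVecMap X M + matVecMap Z M := by
  ext v i
  simp [matVecMap, add_smul, Finset.sum_add_distrib]

lemma restrictScalars_matVecMap_map (R : Type u) [CommRing R] [Algebra A R] [Module R M]
    [IsScalarTower A R M] (X : Matrix (Fin b) (Fin a) A) :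
    (matVecMap (X.map (algebraMap A R)) M).restrictScalars A = matVecMap X M :=
  LinearMap.ext fun v => funext fun i =>
    Fintype.sum_congr _ _ fun j => algebraMap_smul R (X i j) (v j)

lemma ker_matVecMap_eq_bot_of_mul_eq_one {S : Matrix (Fin a) (Fin b) A}
    {Y : Matrix (Fin b) (Fin a) A} (h : S * Y = 1) : LinearMap.ker (matVecMap Y M) = ⊥ :=
  LinearMap.ker_eq_bot_of_inverse (by rw [← matVecMap_mul, h, matVecMap_one])

lemma ker_matVecMap_le_range_of_mul_add_mul_eq_one {Y : Matrix (Fin b) (Fin a) A}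
    {S : Matrix (Fin a) (Fin b) A} {Y' : Matrix (Fin c) (Fin b) A} {S' : Matrix (Fin b) (Fin c) A}
    (h : Y * S + S' * Y' = 1) :
    LinearMap.ker (matVecMap Y' M) ≤ LinearMap.range (matVecMap Y M) := by
  intro v hv
  refine ⟨matVecMap S M v, ?_⟩
  have hv' := LinearMap.congr_fun (congrArg (fun Z => matVecMap Z M) h) v
  rwa [matVecMap_add, matVecMap_mul, matVecMap_mul, matVecMap_one, LinearMap.add_apply,
    LinearMap.comp_apply, LinearMap.comp_apply, LinearMap.mem_ker.mp hv, map_zero, add_zero]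
    at hv'

end MatVecMap

section Localization

variable {A : Type u} [CommRing A]

lemma not_le_of_htM_lt_htMIdeal {M : Type u} [AddCommGroup M] [Module A M] {p : PrimeSpectrum A}
    (hp : p ∈ Module.support A M) {I : Ideal A} (h : htM A M p < htMIdeal A M I) :
    ¬ I ≤ p.asIdeal :=
  fun hle => (sInf_le (Set.mem_image_of_mem (htM A M)
    (show p ∈ Module.support A M ∩ zeroLocus I from ⟨hp, (mem_zeroLocus _ _).mpr hle⟩))).not_gt h

lemma exists_isUnit_det_submatrix_map_of_not_le {a b r : ℕ} {X : Matrix (Fin a) (Fin b) A}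
    {p : Ideal A} [p.IsPrime] (h : ¬ minorsIdeal r X ≤ p) :
    ∃ (ri : Fin r → Fin a) (ci : Fin r → Fin b), Function.Injective ri ∧
      IsUnit ((X.map (algebraMap A (Localization.AtPrime p))).submatrix ri ci).det := by
  rw [minorsIdeal, Ideal.span_le, Set.not_subset] at h
  obtain ⟨_, ⟨ri, ci, hri, -, rfl⟩, hd⟩ := h
  refine ⟨ri, ci, hri, ?_⟩
  rw [Matrix.submatrix_map, ← RingHom.mapMatrix_apply, ← RingHom.map_det]
  exact IsLocalization.map_units _ (⟨(X.submatrix ri ci).det, hd⟩ : p.primeCompl)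

end Localization

theorem split_exact_of_localized_buchsbaum_eisenbud_complex_general
    (A : Type u) [CommRing A]
    (M : Type u) [AddCommGroup M] [Module A M]
    (n : ℕ) (m : ℕ → ℕ) (X : (j : ℕ) → Matrix (Fin (m (j + 1))) (Fin (m j)) A)
    (hcx : ∀ j, j + 2 ≤ n → X (j + 1) * X j = 0)
    (ha : matrixRank (X 0) = m 0)
    (hb : ∀ j, j + 1 < n → m (j + 1) = matrixRank (X (j + 1)) + matrixRank (X j))
    (hc : ∀ j, j < n →
      ((n - j : ℕ) : ℕ∞) ≤ htMIdeal A M (minorsIdeal (matrixRank (X j)) (X j)))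
    (p : PrimeSpectrum A) (hp : p ∈ Module.support A M)
    (h : ℕ) (hh : (h : ℕ∞) = htM A M p) (hhn : h < n) :
    (∃ s : (j : ℕ) →
        ((Fin (m (j + 1)) → Localization.AtPrime p.asIdeal) →ₗ[Localization.AtPrime p.asIdeal]
          (Fin (m j) → Localization.AtPrime p.asIdeal)),
      (s 0).comp
          (matVecMap ((X 0).map (algebraMap A (Localization.AtPrime p.asIdeal)))
            (Localization.AtPrime p.asIdeal)) = LinearMap.id ∧
      ∀ j, j + 1 < n - h →
        (matVecMap ((X j).map (algebraMap A (Localization.AtPrime p.asIdeal)))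
              (Localization.AtPrime p.asIdeal)).comp (s j) +
          (s (j + 1)).comp
            (matVecMap ((X (j + 1)).map (algebraMap A (Localization.AtPrime p.asIdeal)))
              (Localization.AtPrime p.asIdeal)) = LinearMap.id) ∧
    (∀ (T : Type u) [AddCommGroup T] [Module A T]
        [Module (Localization.AtPrime p.asIdeal) T]
        [IsScalarTower A (Localization.AtPrime p.asIdeal) T],
      LinearMap.ker (matVecMap (X 0) T) = ⊥ ∧
      ∀ j, j + 1 < n - h →
        LinearMap.ker (matVecMap (X (j + 1)) T) ≤ LinearMap.range (matVecMap (X j) T)) := by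
  set R := Localization.AtPrime p.asIdeal
  set Y : ∀ j, Matrix (Fin (m (j + 1))) (Fin (m j)) R := fun j => (X j).map (algebraMap A R)
  have hunit : ∀ j < n - h, ∃ (ri : Fin (matrixRank (X j)) → Fin (m (j + 1)))
      (ci : Fin (matrixRank (X j)) → Fin (m j)),
      Function.Injective ri ∧ IsUnit ((Y j).submatrix ri ci).det := fun j hj =>
    exists_isUnit_det_submatrix_map_of_not_le <| not_le_of_htM_lt_htMIdeal hp <|
      hh ▸ (Nat.cast_lt.mpr (by omega)).trans_le (hc j (by omega))
  obtain ⟨S, hS₀, hS⟩ := exists_contracting_homotopy Y (n := n - h) (by omega) _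
    (fun j hj => by
      rw [← Matrix.map_mul, hcx j (by omega), Matrix.map_zero _ (map_zero _)]) ha
    (fun j hj => hb j (by omega)) hunit
  refine ⟨⟨fun j => matVecMap (S j) R, by rw [← matVecMap_mul, hS₀, matVecMap_one],
    fun j hj => by rw [← matVecMap_mul, ← matVecMap_mul, ← matVecMap_add, hS j hj, matVecMap_one]⟩,
    fun T _ _ _ _ => ⟨?_, fun j hj => ?_⟩⟩
  · rw [← restrictScalars_matVecMap_map R, LinearMap.ker_restrictScalars,
      Submodule.restrictScalars_eq_bot_iff]
    exact ker_matVecMap_eq_bot_of_mul_eq_one hS₀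
  · rw [← restrictScalars_matVecMap_map R, ← restrictScalars_matVecMap_map R (X j),
      LinearMap.ker_restrictScalars, LinearMap.range_restrictScalars]
    exact Submodule.restrictScalars_mono A (ker_matVecMap_le_range_of_mul_add_mul_eq_one (hS j hj))

/-- For a complex `0 → F^{-n} → ⋯ → F^0` of finitely generated free `A`-modules satisfying the
rank and height conditions (a), (b), (c), and a prime `p ∈ Supp M` with `h = ht_M p < n`, the
localized complex `0 → (F^{-n})_p → ⋯ → (F^{-h})_p` is split exact (it admits a contracting
homotopy); consequently for every `A_p`-module `T`, `H^q(F^• ⊗ T) = 0` for all `q < -h`. -/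
theorem split_exact_of_localized_buchsbaum_eisenbud_complex
    (A : Type u) [CommRing A] [IsNoetherianRing A]
    (M : Type u) [AddCommGroup M] [Module A M] [Module.Finite A M]
    (n : ℕ) (m : ℕ → ℕ) (X : (j : ℕ) → Matrix (Fin (m (j + 1))) (Fin (m j)) A)
    (hcx : ∀ j, j + 2 ≤ n → X (j + 1) * X j = 0)
    (ha : matrixRank (X 0) = m 0)
    (hb : ∀ j, j + 1 < n → m (j + 1) = matrixRank (X (j + 1)) + matrixRank (X j))
    (hc : ∀ j, j < n →
      ((n - j : ℕ) : ℕ∞) ≤ htMIdeal A M (minorsIdeal (matrixRank (X j)) (X j)))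
    (p : PrimeSpectrum A) (hp : p ∈ Module.support A M)
    (h : ℕ) (hh : (h : ℕ∞) = htM A M p) (hhn : h < n) :
    (∃ s : (j : ℕ) →
        ((Fin (m (j + 1)) → Localization.AtPrime p.asIdeal) →ₗ[Localization.AtPrime p.asIdeal]
          (Fin (m j) → Localization.AtPrime p.asIdeal)),
      (s 0).comp
          (matVecMap ((X 0).map (algebraMap A (Localization.AtPrime p.asIdeal)))
            (Localization.AtPrime p.asIdeal)) = LinearMap.id ∧
      ∀ j, j + 1 < n - h →
        (matVecMap ((X j).map (algebraMap A (Localization.AtPrime p.asIdeal)))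
              (Localization.AtPrime p.asIdeal)).comp (s j) +
          (s (j + 1)).comp
            (matVecMap ((X (j + 1)).map (algebraMap A (Localization.AtPrime p.asIdeal)))
              (Localization.AtPrime p.asIdeal)) = LinearMap.id) ∧
    (∀ (T : Type u) [AddCommGroup T] [Module A T]
        [Module (Localization.AtPrime p.asIdeal) T]
        [IsScalarTower A (Localization.AtPrime p.asIdeal) T],
      LinearMap.ker (matVecMap (X 0) T) = ⊥ ∧
      ∀ j, j + 1 < n - h →
        LinearMap.ker (matVecMap (X (j + 1)) T) ≤ LinearMap.range (matVecMap (X j) T)) :=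
  split_exact_of_localized_buchsbaum_eisenbud_complex_general A M n m X hcx ha hb hc p hp h hh hhn
end
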